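/- arXiv:1510.02493 — 14 statements merged into one kernel-verified Lean document; each statement's English description precedes it below -/
import Mathlib

section
/- Let F be an additively idempotent semifield. Then every proper congruence on the Laurent polynomial semiring F(x_1,...,x_n) has trivial kernel, i.e., the equivalence class of 0 under any proper congruence is {0}. -/
/-!
Since addition is idempotent, `p + m = p` for every monomial `m` of `p`, so `p ~ 0` forces
`m ~ 0`. Over a semifield every nonzero Laurent monomial is a unit, and a congruence relating a
unit to `0` relates everything.
-/

namespace RingCon

variable {R : Type*} [Semiring R] (C : RingCon R)

theorem rel_zero_of_add_eq_self {p m : R} (hp : C p 0) (hpm : p + m = p) : C m 0 := by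
  have h := C.add hp (C.refl m)
  rw [hpm, zero_add] at h
  exact C.trans (C.symm h) hp

theorem rel_of_isUnit_rel_zero {u : R} (hu : IsUnit u) (hu0 : C u 0) (x y : R) : C x y := by
  obtain ⟨v, hv⟩ := hu.exists_right_inv
  have h10 : C 1 0 := by simpa [hv] using C.mul hu0 (C.refl v)
  have hx0 (z : R) : C z 0 := by simpa using C.mul (C.refl z) h10
  exact C.trans (hx0 x) (C.symm (hx0 y))

end RingCon

namespace AddMonoidAlgebra

variable {k G : Type*}

theorem add_single_coeff_self [Semiring k] (hidem : ∀ a : k, a + a = a)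
    (p : AddMonoidAlgebra k G) (a : G) : p + single a (p.coeff a) = p := by
  classical
  ext b
  by_cases hb : a = b
  · subst hb; simp [hidem]
  · simp [Finsupp.single_eq_of_ne' hb]

theorem isUnit_single [Semiring k] [AddGroup G] {c : k} (hc : IsUnit c) (a : G) :
    IsUnit (single a c) := by
  have h : IsUnit (c, Multiplicative.ofAdd a) := Prod.isUnit_iff.2 ⟨hc, Group.isUnit _⟩
  simpa using h.map (singleHom (R := k) (M := G))

theorem ringCon_rel_of_rel_zero_of_ne_zero [DivisionSemiring k] [AddGroup G]
    (hidem : ∀ a : k, a + a = a)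
    (C : RingCon (AddMonoidAlgebra k G)) {p : AddMonoidAlgebra k G} (hp : C p 0) (hp0 : p ≠ 0)
    (x y : AddMonoidAlgebra k G) : C x y := by
  obtain ⟨a, ha⟩ : ∃ a, p.coeff a ≠ 0 := by
    by_contra! h
    exact hp0 (coeff_eq_zero.1 (Finsupp.ext h))
  exact C.rel_of_isUnit_rel_zero (isUnit_single (Ne.isUnit ha) a)
    (C.rel_zero_of_add_eq_self hp (add_single_coeff_self hidem p a)) x y

end AddMonoidAlgebra

/-- Every proper congruence of the Laurent polynomial semiring
`F(x_1, …, x_n)` over an additively idempotent semifield `F` has trivial kernel. -/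
theorem stmt_0 (F : Type*) [Semifield F] (hidem : ∀ a : F, a + a = a) (n : ℕ)
    (C : RingCon (AddMonoidAlgebra F (Fin n →₀ ℤ)))
    (hproper : ∃ p q : AddMonoidAlgebra F (Fin n →₀ ℤ), ¬ C p q) :
    ∀ p : AddMonoidAlgebra F (Fin n →₀ ℤ), C p 0 → p = 0 := by
  obtain ⟨q, r, hqr⟩ := hproper
  intro p hp
  by_contra hp0
  exact hqr (AddMonoidAlgebra.ringCon_rel_of_rel_zero_of_ne_zero hidem C hp hp0 q r)
end

section
/- An additively idempotent commutative semiring A is a domain (its trivial congruence is prime) if and only if A is cancellative and totally ordered by the relation a ≤ b iff a + b = b. -/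
/-- A prime congruence: proper, and twisted products in P force a factor in P. -/
def IsPrimeCon {A : Type*} [CommSemiring A] (P : RingCon A) : Prop :=
  (∃ a b : A, ¬ P a b) ∧
    ∀ a₁ a₂ b₁ b₂ : A,
      P (a₁ * b₁ + a₂ * b₂) (a₁ * b₂ + a₂ * b₁) → P a₁ a₂ ∨ P b₁ b₂

/-- The trivial (diagonal) congruence. -/
def diagCon (A : Type*) [CommSemiring A] : RingCon A where
  r a b := a = b
  iseqv := ⟨fun _ => rfl, Eq.symm, Eq.trans⟩
  add' := by rintro a b c d rfl rfl; rfl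
  mul' := by rintro a b c d rfl rfl; rfl

/-!
Write `a ≤ b` for `a + b = b`. If the diagonal is prime, the twisted product of `(a, 0)` and
`(b, c)` gives cancellativity, and that of `(a + b, a)` and `(a + b, b)` (both sides equal
`a² + ab + b²` by idempotency) gives `a + b = a` or `a + b = b`. Conversely, for a total order
we may assume `a₂ ≤ a₁` and `b₂ ≤ b₁`; then `a₁b₁ + a₂b₂ = a₁b₁`, while `a₁b₂ + a₂b₁` is the
larger of its two terms, so cancelling `a₁` or `b₁` gives `b₁ = b₂` or `a₁ = a₂` (a vanishing
`a₁` or `b₁` forces `a₂` or `b₂` to vanish as well).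
-/

section

variable {A : Type*} [CommSemiring A]

theorem cancel_of_isPrimeCon_diagCon (hP : IsPrimeCon (diagCon A)) (a b c : A)
    (h : a * b = a * c) : a = 0 ∨ b = c :=
  hP.2 a 0 b c (show a * b + 0 * c = a * c + 0 * b by simp [h])

theorem add_mul_self_add_mul_eq (hidem : ∀ a : A, a + a = a) (a b : A) :
    (a + b) * (a + b) + a * b = (a + b) * b + a * (a + b) := by
  have htriple : a * b + a * b + a * b = a * b := by rw [hidem, hidem]
  calc (a + b) * (a + b) + a * b = a * a + (a * b + a * b + a * b) + b * b := by ring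
    _ = a * a + (a * b + a * b) + b * b := by rw [htriple, hidem]
    _ = (a + b) * b + a * (a + b) := by ring

theorem total_of_isPrimeCon_diagCon (hidem : ∀ a : A, a + a = a)
    (hP : IsPrimeCon (diagCon A)) (a b : A) : a + b = a ∨ a + b = b :=
  hP.2 (a + b) a (a + b) b (add_mul_self_add_mul_eq hidem a b)

theorem add_eq_right_trans {a b c : A} (hab : a + b = b) (hbc : b + c = c) : a + c = c := by
  rw [← hbc, ← add_assoc, hab]

theorem mul_add_mul_eq_of_add_eq_right {a₁ a₂ b₁ b₂ : A} (ha : a₂ + a₁ = a₁)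
    (hb : b₂ + b₁ = b₁) : a₁ * b₁ + a₂ * b₂ = a₁ * b₁ := by
  have hle : a₂ * b₂ + a₁ * b₁ = a₁ * b₁ :=
    add_eq_right_trans (by rw [← add_mul, ha] : a₂ * b₂ + a₁ * b₂ = a₁ * b₂)
      (by rw [← mul_add, hb])
  rw [add_comm, hle]

theorem eq_zero_of_add_eq_right_of_eq_zero {a b : A} (h : a + b = b) (hb : b = 0) : a = 0 := by
  rwa [hb, add_zero] at h

variable (hcanc : ∀ a b c : A, a * b = a * c → a = 0 ∨ b = c)
  (htot : ∀ a b : A, a + b = a ∨ a + b = b)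
include hcanc htot

theorem eq_or_eq_of_twisted_eq_of_add_eq_right {a₁ a₂ b₁ b₂ : A} (ha : a₂ + a₁ = a₁)
    (hb : b₂ + b₁ = b₁) (h : a₁ * b₁ + a₂ * b₂ = a₁ * b₂ + a₂ * b₁) : a₁ = a₂ ∨ b₁ = b₂ := by
  rw [mul_add_mul_eq_of_add_eq_right ha hb] at h
  rcases htot (a₁ * b₂) (a₂ * b₁) with hmax | hmax <;> rw [hmax] at h
  · rcases hcanc a₁ b₁ b₂ h with h0 | hb_eq
    · exact Or.inl (by rw [h0, eq_zero_of_add_eq_right_of_eq_zero ha h0])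
    · exact Or.inr hb_eq
  · rw [mul_comm a₁, mul_comm a₂] at h
    rcases hcanc b₁ a₁ a₂ h with h0 | ha_eq
    · exact Or.inr (by rw [h0, eq_zero_of_add_eq_right_of_eq_zero hb h0])
    · exact Or.inl ha_eq

theorem eq_or_eq_of_twisted_eq {a₁ a₂ b₁ b₂ : A}
    (h : a₁ * b₁ + a₂ * b₂ = a₁ * b₂ + a₂ * b₁) : a₁ = a₂ ∨ b₁ = b₂ := by
  wlog ha : a₂ + a₁ = a₁ generalizing a₁ a₂
  · have ha' : a₁ + a₂ = a₂ := (htot a₁ a₂).resolve_left (by rwa [add_comm])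
    exact (this (by rw [add_comm (a₂ * b₁), ← h, add_comm]) ha').imp Eq.symm id
  wlog hb : b₂ + b₁ = b₁ generalizing b₁ b₂
  · have hb' : b₁ + b₂ = b₂ := (htot b₁ b₂).resolve_left (by rwa [add_comm])
    exact (this h.symm hb').imp id Eq.symm
  exact eq_or_eq_of_twisted_eq_of_add_eq_right hcanc htot ha hb h

theorem isPrimeCon_diagCon_of_cancel_of_total [Nontrivial A] : IsPrimeCon (diagCon A) :=
  ⟨exists_pair_ne A, fun _ _ _ _ h => eq_or_eq_of_twisted_eq hcanc htot h⟩

end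

/-- An additively idempotent commutative semiring is a domain (its diagonal
congruence is prime) iff it is cancellative and totally ordered by
`a ≤ b ↔ a + b = b`. -/
theorem stmt_3 (A : Type*) [CommSemiring A] [Nontrivial A]
    (hidem : ∀ a : A, a + a = a) :
    IsPrimeCon (diagCon A) ↔
      ((∀ a b c : A, a * b = a * c → a = 0 ∨ b = c) ∧
        ∀ a b : A, a + b = a ∨ a + b = b) :=
  ⟨fun hP => ⟨cancel_of_isPrimeCon_diagCon hP, total_of_isPrimeCon_diagCon hidem hP⟩,
    fun ⟨hcanc, htot⟩ => isPrimeCon_diagCon_of_cancel_of_total hcanc htot⟩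
end

section
/- Every additively idempotent commutative semiring admits a surjective semiring homomorphism onto the two-element Boolean semifield B = {0,1} with 1 + 1 = 1. -/
/-!
Let `S = {a | 1 + a = a}`, the elements above `1` for the natural order `a ≤ b ↔ a + b = b`;
it is a multiplicative submonoid missing `0`. By Zorn, some ideal `P` is maximal among those
disjoint from `S`, and such an ideal is prime. Since `S` is closed under adding anything, the
k-closure `{x | ∃ p ∈ P, x + p ∈ P}` of `P` is still disjoint from `S`, so `P` is a k-ideal.
As `a + (a + b) = a + b`, a k-ideal is downward closed: `a + b ∈ P ↔ a ∈ P ∧ b ∈ P`.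
The indicator of the complement of `P` is then the required map onto `B`.
-/

section

variable {A : Type*}

namespace Submonoid

def oneAddFixed [Semiring A] (h : (1 : A) + 1 = 1) : Submonoid A where
  carrier := {a | 1 + a = a}
  one_mem' := h
  mul_mem' {a b} ha hb := by
    have hab : b + a * b = a * b := by
      conv_rhs => rw [← (ha : 1 + a = a)]
      rw [add_mul, one_mul]
    change 1 + a * b = a * b
    rw [← hab, ← add_assoc, (hb : 1 + b = b)]

theorem mem_oneAddFixed [Semiring A] {h : (1 : A) + 1 = 1} {a : A} :
    a ∈ oneAddFixed h ↔ 1 + a = a :=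
  Iff.rfl

theorem add_mem_oneAddFixed [Semiring A] {h : (1 : A) + 1 = 1} {a : A}
    (ha : a ∈ oneAddFixed h) (b : A) : a + b ∈ oneAddFixed h := by
  rw [mem_oneAddFixed, ← add_assoc, mem_oneAddFixed.mp ha]

theorem disjoint_bot_oneAddFixed [Semiring A] [Nontrivial A] (h : (1 : A) + 1 = 1) :
    Disjoint ((⊥ : Ideal A) : Set A) (oneAddFixed h) := by
  refine Set.disjoint_left.mpr fun a ha h1a => one_ne_zero (α := A) ?_
  rw [SetLike.mem_coe, Ideal.mem_bot] at ha
  rwa [SetLike.mem_coe, ha, mem_oneAddFixed, add_zero] at h1a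

end Submonoid

namespace Ideal

variable [Semiring A]

/-- The k-closure of an ideal: the least subtractive ideal containing it. -/
def kClosure (I : Ideal A) : Ideal A where
  carrier := {x | ∃ p ∈ I, x + p ∈ I}
  zero_mem' := ⟨0, I.zero_mem, by simp⟩
  add_mem' := by
    rintro x y ⟨p, hp, hxp⟩ ⟨q, hq, hyq⟩
    refine ⟨p + q, I.add_mem hp hq, ?_⟩
    rw [add_add_add_comm]
    exact I.add_mem hxp hyq
  smul_mem' := by
    rintro r x ⟨p, hp, hxp⟩
    refine ⟨r * p, I.mul_mem_left r hp, ?_⟩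
    rw [smul_eq_mul, ← mul_add]
    exact I.mul_mem_left r hxp

theorem le_kClosure (I : Ideal A) : I ≤ I.kClosure :=
  fun p hp => ⟨0, I.zero_mem, by simpa using hp⟩

theorem disjoint_kClosure {I : Ideal A} {S : Set A} (hS : ∀ x ∈ S, ∀ y, x + y ∈ S)
    (hIS : Disjoint (I : Set A) S) : Disjoint (I.kClosure : Set A) S :=
  Set.disjoint_left.mpr fun _ ⟨p, _, hxp⟩ hx => Set.disjoint_left.mp hIS hxp (hS _ hx p)

theorem exists_le_maximal_disjoint {I : Ideal A} {S : Set A} (hIS : Disjoint (I : Set A) S) :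
    ∃ P : Ideal A, I ≤ P ∧ Maximal (fun J : Ideal A => Disjoint (J : Set A) S) P := by
  refine zorn_le_nonempty₀ {J : Ideal A | Disjoint (J : Set A) S} (fun c hc hchain J hJ => ?_)
    I hIS
  refine ⟨sSup c, Set.disjoint_left.mpr fun x hx => ?_, fun _ => le_sSup⟩
  have : Nonempty c := ⟨⟨J, hJ⟩⟩
  obtain ⟨K, hxK⟩ :=
    (Submodule.mem_iSup_of_directed _ hchain.directed).mp (sSup_eq_iSup' c ▸ hx)
  exact Set.disjoint_left.mp (hc K.2) hxK

theorem mem_of_add_mem_of_maximal_disjoint {P : Ideal A} {S : Set A}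
    (hS : ∀ x ∈ S, ∀ y, x + y ∈ S)
    (hP : Maximal (fun J : Ideal A => Disjoint (J : Set A) S) P) {x p : A}
    (hp : p ∈ P) (hxp : x + p ∈ P) : x ∈ P :=
  hP.2 (disjoint_kClosure hS hP.1) P.le_kClosure ⟨p, hp, hxp⟩

end Ideal

theorem Ideal.exists_bool_hom_of_isPrime [CommSemiring A] (P : Ideal A) [hP : P.IsPrime]
    (hlower : ∀ a b : A, a + b ∈ P → a ∈ P) :
    ∃ f : A → Bool, Function.Surjective f ∧ f 0 = false ∧ f 1 = true ∧
      (∀ a b : A, f (a + b) = (f a || f b)) ∧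
      (∀ a b : A, f (a * b) = (f a && f b)) := by
  classical
  have h1 : (1 : A) ∉ P := P.ne_top_iff_one.mp hP.ne_top
  have hadd (a b : A) : a + b ∈ P ↔ a ∈ P ∧ b ∈ P :=
    ⟨fun h => ⟨hlower a b h, hlower b a (add_comm a b ▸ h)⟩, fun h => P.add_mem h.1 h.2⟩
  refine ⟨fun a => decide (a ∉ P), ?_, by simp, by simp [h1], fun a b => ?_, fun a b => ?_⟩
  · rintro (_ | _)
    exacts [⟨0, by simp⟩, ⟨1, by simp [h1]⟩]
  · simp only [hadd, not_and_or, Bool.decide_or]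
  · simp only [hP.mul_mem_iff_mem_or_mem, not_or, Bool.decide_and]

end

/-- Every additively idempotent commutative semiring maps surjectively onto the
two-element Boolean semifield `B = {0, 1}` with `1 + 1 = 1` (realized on `Bool`
with `‖` as addition and `&&` as multiplication). -/
theorem stmt_4 (A : Type*) [CommSemiring A] [Nontrivial A]
    (hidem : ∀ a : A, a + a = a) :
    ∃ f : A → Bool, Function.Surjective f ∧ f 0 = false ∧ f 1 = true ∧
      (∀ a b : A, f (a + b) = (f a || f b)) ∧
      (∀ a b : A, f (a * b) = (f a && f b)) := by
  set S := Submonoid.oneAddFixed (hidem 1)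
  have hS : ∀ x ∈ (S : Set A), ∀ y, x + y ∈ (S : Set A) :=
    fun _ hx => Submonoid.add_mem_oneAddFixed hx
  obtain ⟨P, -, hP⟩ :=
    Ideal.exists_le_maximal_disjoint (Submonoid.disjoint_bot_oneAddFixed (hidem 1))
  have : P.IsPrime := Ideal.isPrime_of_maximally_disjoint P S hP.1 fun _ => hP.not_prop_of_gt
  refine P.exists_bool_hom_of_isPrime fun a b hab => ?_
  exact Ideal.mem_of_add_mem_of_maximal_disjoint hS hP hab (by rwa [← add_assoc, hidem])
end

section
/- The only additively idempotent commutative semiring that is a domain and has Krull dimension 0 is the two-element Boolean semifield B. -/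
/-- `HasKrullDim A d` : the longest chain of prime congruences of `A` has `d` strict
inclusions. -/
def HasKrullDim (A : Type*) [CommSemiring A] (d : ℕ) : Prop :=
  (∃ c : Fin (d + 1) → RingCon A, StrictMono c ∧ ∀ i, IsPrimeCon (c i)) ∧
    ∀ (m : ℕ) (c : Fin (m + 1) → RingCon A),
      StrictMono c → (∀ i, IsPrimeCon (c i)) → m ≤ d

theorem add_eq_zero_iff_of_add_self {M : Type*} [AddCommMonoid M] (hidem : ∀ a : M, a + a = a)
    {a b : M} : a + b = 0 ↔ a = 0 ∧ b = 0 := by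
  refine ⟨fun h => ⟨?_, ?_⟩, fun ⟨ha, hb⟩ => by rw [ha, hb, add_zero]⟩
  · calc a = a + (a + b) := by rw [h, add_zero]
      _ = 0 := by rw [← add_assoc, hidem, h]
  · calc b = (a + b) + b := by rw [h, zero_add]
      _ = 0 := by rw [add_assoc, hidem, h]

section

variable {A : Type*} [CommSemiring A]

theorem diagCon_apply (a b : A) : diagCon A a b ↔ a = b := Iff.rfl

theorem HasKrullDim.pos_of_lt {d : ℕ} (hd : HasKrullDim A d)
    {P Q : RingCon A} (hP : IsPrimeCon P) (hQ : IsPrimeCon Q) (hPQ : P < Q) : 0 < d :=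
  hd.2 1 ![P, Q] (Fin.strictMono_iff_lt_succ.2 fun i => by fin_cases i; exact hPQ)
    fun i => by fin_cases i <;> assumption

theorem IsPrimeCon.nontrivial_of_diagCon (h : IsPrimeCon (diagCon A)) : Nontrivial A :=
  let ⟨a, b, hab⟩ := h.1
  ⟨⟨a, b, hab⟩⟩

theorem IsPrimeCon.noZeroDivisors_of_diagCon (h : IsPrimeCon (diagCon A)) :
    NoZeroDivisors A where
  eq_zero_or_eq_zero_of_mul_eq_zero {a b} hab :=
    h.2 a 0 b 0 (by simp only [diagCon_apply, hab, mul_zero, zero_mul, add_zero])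

def supportCon (hadd : ∀ a b : A, a + b = 0 ↔ a = 0 ∧ b = 0) [NoZeroDivisors A] :
    RingCon A where
  r a b := a = 0 ↔ b = 0
  iseqv := ⟨fun _ => Iff.rfl, Iff.symm, Iff.trans⟩
  add' {a b c d} (hab : a = 0 ↔ b = 0) (hcd : c = 0 ↔ d = 0) := by
    rw [hadd, hadd, hab, hcd]
  mul' {a b c d} (hab : a = 0 ↔ b = 0) (hcd : c = 0 ↔ d = 0) := by
    rw [mul_eq_zero, mul_eq_zero, hab, hcd]

variable (hadd : ∀ a b : A, a + b = 0 ↔ a = 0 ∧ b = 0) [NoZeroDivisors A]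

theorem supportCon_apply (a b : A) : supportCon hadd a b ↔ (a = 0 ↔ b = 0) := Iff.rfl

theorem isPrimeCon_supportCon [Nontrivial A] : IsPrimeCon (supportCon hadd) := by
  refine ⟨⟨0, 1, by simp [supportCon_apply]⟩, fun a₁ a₂ b₁ b₂ h => ?_⟩
  simp only [supportCon_apply, hadd, mul_eq_zero] at h ⊢
  tauto

theorem diagCon_lt_supportCon {a : A} (ha₀ : a ≠ 0) (ha₁ : a ≠ 1) :
    diagCon A < supportCon hadd := by
  refine lt_of_le_of_ne (fun x y (hxy : x = y) => by rw [supportCon_apply, hxy]) fun h => ?_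
  have h₁ : (1 : A) ≠ 0 := fun h₁ => ha₀ (by rw [← mul_one a, h₁, mul_zero])
  have ha : supportCon hadd a 1 := by simp [supportCon_apply, ha₀, h₁]
  exact ha₁ (by rwa [← h, diagCon_apply] at ha)

end

/-- The only additively idempotent commutative semiring that is a domain of Krull
dimension 0 is the two-element Boolean semifield `B = {0, 1}`. -/
theorem stmt_5 (A : Type*) [CommSemiring A] (hidem : ∀ a : A, a + a = a)
    (hdom : IsPrimeCon (diagCon A)) (h0 : HasKrullDim A 0) :
    (0 : A) ≠ 1 ∧ ∀ a : A, a = 0 ∨ a = 1 := by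
  have := hdom.nontrivial_of_diagCon
  have := hdom.noZeroDivisors_of_diagCon
  have hadd : ∀ a b : A, a + b = 0 ↔ a = 0 ∧ b = 0 := fun _ _ =>
    add_eq_zero_iff_of_add_self hidem
  refine ⟨zero_ne_one, fun a => ?_⟩
  by_contra! ha
  exact (h0.pos_of_lt hdom (isPrimeCon_supportCon hadd)
    (diagCon_lt_supportCon hadd ha.1 ha.2)).false
end

section
/- Let A be an additively idempotent commutative semiring and let (P_i) be a family of prime congruences of A, each with trivial kernel. Then the intersection ⋂ P_i is a quotient-cancellative congruence: whenever (xa, xb) ∈ ⋂ P_i with x ≠ 0, we have (a,b) ∈ ⋂ P_i. -/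
/-- The twisted product of `(x, 0)` and `(a, b)` is `(x * a, x * b)`. -/
theorem IsPrimeCon.rel_of_rel_mul_left {A : Type*} [CommSemiring A] {P : RingCon A}
    (hP : IsPrimeCon P) {x a b : A} (hx : ¬ P x 0) (h : P (x * a) (x * b)) : P a b :=
  (hP.2 x 0 a b (by simpa using h)).resolve_left hx

theorem stmt_6_general (A : Type*) [CommSemiring A]
    {ι : Type*} (P : ι → RingCon A) (hprime : ∀ i, IsPrimeCon (P i))
    (hker : ∀ i, ∀ a : A, P i a 0 → a = 0)
    (x a b : A) (hx : x ≠ 0) (h : ∀ i, P i (x * a) (x * b)) :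
    ∀ i, P i a b :=
  fun i => (hprime i).rel_of_rel_mul_left (fun hx0 => hx (hker i x hx0)) (h i)

/-- The intersection of a family of prime congruences with trivial kernels is
quotient-cancellative. -/
theorem stmt_6 (A : Type*) [CommSemiring A] (hidem : ∀ a : A, a + a = a)
    {ι : Type*} (P : ι → RingCon A) (hprime : ∀ i, IsPrimeCon (P i))
    (hker : ∀ i, ∀ a : A, P i a 0 → a = 0)
    (x a b : A) (hx : x ≠ 0) (h : ∀ i, P i (x * a) (x * b)) :
    ∀ i, P i a b :=
  stmt_6_general A P hprime hker x a b hx h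
end

section
/- Let A be a cancellative additively idempotent commutative semiring and a,b,c,d ∈ A with a > b and c > d (where x > y means x + y = x and x ≠ y). Then ac > bd. -/
/-! Expanding `a * c = (a + b) * (c + d)` shows that `a * c` absorbs `b * d`. If moreover
`a * c = b * d`, then `a * c = a * (c + d) = b * d + a * d = (a + b) * d = a * d`, and cancelling
`a ≠ 0` gives `c = d`. -/

section
variable {A : Type*} [Semiring A]

theorem mul_add_mul_eq_of_add_eq (hidem : ∀ x : A, x + x = x) {a b c d : A}
    (hab : a + b = a) (hcd : c + d = c) : a * c + b * d = a * c := by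
  have hexpand : a * c = a * c + a * d + (b * c + b * d) := by
    conv_lhs => rw [← hab, ← hcd]
    rw [add_mul, mul_add, mul_add]
  calc
    a * c + b * d = a * c + a * d + (b * c + (b * d + b * d)) := by
      conv_lhs => rw [hexpand]
      simp only [add_assoc]
    _ = a * c := by rw [hidem, ← hexpand]

theorem mul_ne_mul_of_add_eq_of_ne (hcanc : ∀ x y z : A, x * y = x * z → x = 0 ∨ y = z)
    {a b c d : A} (hab : a + b = a) (hab' : a ≠ b) (hcd : c + d = c) (hcd' : c ≠ d) :
    a * c ≠ b * d := by
  intro heq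
  have ha : a ≠ 0 := by
    rintro rfl
    exact hab' (by rw [← hab, zero_add])
  have hacd : a * c = a * d :=
    calc a * c = a * c + a * d := by rw [← mul_add, hcd]
      _ = (a + b) * d := by rw [heq, add_mul, add_comm]
      _ = a * d := by rw [hab]
  exact (hcanc a c d hacd).elim ha hcd'

end

/-- In a cancellative additively idempotent commutative semiring, `a > b` and
`c > d` (where `x > y` means `x + y = x` and `x ≠ y`) imply `ac > bd`. -/
theorem stmt_7 (A : Type*) [CommSemiring A] (hidem : ∀ a : A, a + a = a)
    (hcanc : ∀ a b c : A, a * b = a * c → a = 0 ∨ b = c)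
    (a b c d : A) (hab : a + b = a) (hab' : a ≠ b)
    (hcd : c + d = c) (hcd' : c ≠ d) :
    a * c + b * d = a * c ∧ a * c ≠ b * d :=
  ⟨mul_add_mul_eq_of_add_eq hidem hab hcd, mul_ne_mul_of_add_eq_of_ne hcanc hab hab' hcd hcd'⟩
end

section
/- Let A be an additively idempotent commutative semiring and P a prime congruence on A. If (x^n, y^n) ∈ P for some n > 0, then (x, y) ∈ P. -/
/-- The trivial congruence on `S` satisfies the primality condition of `IsPrimeCon`. -/
def TwistedCancellative (S : Type*) [CommSemiring S] : Prop :=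
  ∀ a₁ a₂ b₁ b₂ : S, a₁ * b₁ + a₂ * b₂ = a₁ * b₂ + a₂ * b₁ → a₁ = a₂ ∨ b₁ = b₂

namespace RingCon

variable {A : Type*} [CommSemiring A] {P : RingCon A}

theorem twistedCancellative_quotient (hP : IsPrimeCon P) :
    TwistedCancellative P.Quotient := by
  simp only [TwistedCancellative, P.mk'_surjective.forall, coe_mk', ← coe_mul, ← coe_add,
    RingCon.eq]
  exact hP.2

theorem quotient_add_self (hidem : ∀ a : A, a + a = a) (a : P.Quotient) : a + a = a := by
  obtain ⟨a, rfl⟩ := P.mk'_surjective a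
  rw [← map_add, hidem]

end RingCon

namespace TwistedCancellative

section CommSemiring

variable {S : Type*} [CommSemiring S] (hS : TwistedCancellative S)
include hS

theorem eq_or_eq_zero_of_mul_eq_mul {a b c : S} (h : a * c = b * c) : a = b ∨ c = 0 :=
  hS a b c 0 (by simpa using h)

theorem noZeroDivisors : NoZeroDivisors S where
  eq_zero_or_eq_zero_of_mul_eq_zero {a b} h :=
    hS.eq_or_eq_zero_of_mul_eq_mul (by rw [h, zero_mul])

end CommSemiring

variable {S : Type*} [IdemCommSemiring S] (hS : TwistedCancellative S)
include hS

theorem le_total (x y : S) : x ≤ y ∨ y ≤ x := by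
  have key : (x + y) * (x + y) + x * y = (x + y) * y + x * (x + y) := by
    calc (x + y) * (x + y) + x * y = x * x + (x * y + x * y + x * y) + y * y := by ring
      _ = x * x + (x * y + x * y) + y * y := by rw [add_idem, add_idem]
      _ = (x + y) * y + x * (x + y) := by ring
  rcases hS _ _ _ _ key with h | h
  · exact Or.inr (add_eq_left_iff_le.mp h)
  · exact Or.inl (add_eq_right_iff_le.mp h)

theorem eq_of_le_of_pow_succ_eq {x y : S} (hyx : y ≤ x) {k : ℕ}
    (h : x ^ (k + 1) = y ^ (k + 1)) : x = y := by
  have hsq : y * x ^ k = x * x ^ k := by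
    refine le_antisymm (mul_le_mul_left hyx _) ?_
    calc x * x ^ k = y ^ (k + 1) := by rw [← pow_succ', h]
      _ = y * y ^ k := pow_succ' y k
      _ ≤ y * x ^ k := mul_le_mul_right (pow_le_pow_left' hyx k) y
  have := hS.noZeroDivisors
  rcases hS.eq_or_eq_zero_of_mul_eq_mul hsq with hxy | hxk
  · exact hxy.symm
  · have hx : x = 0 := eq_zero_of_pow_eq_zero hxk
    have hyk : y ^ (k + 1) = 0 := by rw [← h, hx, zero_pow k.succ_ne_zero]
    rw [hx, eq_zero_of_pow_eq_zero hyk]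

theorem pow_left_injective {n : ℕ} (hn : n ≠ 0) : Function.Injective fun x : S ↦ x ^ n := by
  obtain ⟨k, rfl⟩ := Nat.exists_eq_succ_of_ne_zero hn
  intro x y h
  rcases hS.le_total x y with hxy | hyx
  · exact (hS.eq_of_le_of_pow_succ_eq hxy h.symm).symm
  · exact hS.eq_of_le_of_pow_succ_eq hyx h

end TwistedCancellative

/-- If `(x^n, y^n)` lies in a prime congruence `P` of an additively idempotent
commutative semiring for some `n > 0`, then `(x, y) ∈ P`. -/
theorem stmt_8 (A : Type*) [CommSemiring A] (hidem : ∀ a : A, a + a = a)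
    (P : RingCon A) (hP : IsPrimeCon P) (x y : A) (n : ℕ) (hn : 0 < n)
    (h : P (x ^ n) (y ^ n)) : P x y := by
  let : IdemCommSemiring P.Quotient :=
    { (inferInstance : CommSemiring P.Quotient),
      IdemSemiring.ofSemiring (RingCon.quotient_add_self hidem) with }
  rw [← RingCon.eq] at h ⊢
  simp only [RingCon.coe_pow] at h
  exact (RingCon.twistedCancellative_quotient hP).pow_left_injective hn.ne' h
end

section
/- Let A be an additively idempotent commutative semiring and let P_1 ⊊ P_2 ⊆ P_3 ⊊ P_4 be prime congruences of the Laurent polynomial semiring A(x) in one variable, all with the same kernel. Then P_1 restricted to A is strictly contained in P_2 restricted to A, or P_3 restricted to A is strictly contained in P_4 restricted to A. -/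
open Finset LaurentPolynomial

theorem mul_sum_pow_mul_pow_left {R : Type*} [CommSemiring R] (a b : R) (n : ℕ) :
    a * ∑ i ∈ range (n + 1), a ^ i * b ^ (n - i) =
      a ^ (n + 1) + ∑ i ∈ range n, a ^ (i + 1) * b ^ (n - i) := by
  rw [mul_sum, sum_range_succ, Nat.sub_self, pow_zero, mul_one, add_comm]
  congr 1
  · ring
  · exact sum_congr rfl fun i _ => by ring

theorem mul_sum_pow_mul_pow_right {R : Type*} [CommSemiring R] (a b : R) (n : ℕ) :
    b * ∑ i ∈ range (n + 1), a ^ i * b ^ (n - i) =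
      b ^ (n + 1) + ∑ i ∈ range n, a ^ (i + 1) * b ^ (n - i) := by
  rw [mul_sum, sum_range_succ', pow_zero, one_mul, Nat.sub_zero, add_comm]
  congr 1
  · ring
  · refine sum_congr rfl fun i hi => ?_
    rw [show n - i = n - (i + 1) + 1 by have := mem_range.1 hi; omega]
    ring

namespace RingCon

variable {R : Type*} [CommSemiring R] (P : RingCon R)

theorem mul_right_rel_iff_of_isUnit {u a b : R} (hu : IsUnit u) :
    P (a * u) (b * u) ↔ P a b := by
  refine ⟨fun h => ?_, fun h => P.mul h (P.refl u)⟩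
  obtain ⟨v, huv⟩ := hu.exists_right_inv
  simpa [mul_assoc, huv] using P.mul h (P.refl v)

theorem rel_zero_of_add_rel_zero (hid : ∀ x : R, x + x = x) {a b : R} (h : P (a + b) 0) :
    P a 0 := by
  have h' : P (a + (a + b)) (a + 0) := P.add (P.refl a) h
  rw [← add_assoc, hid, add_zero] at h'
  exact P.trans (P.symm h') h

end RingCon

namespace IsPrimeCon

variable {R : Type*} [CommSemiring R] {P : RingCon R}

theorem not_one_rel_zero (hP : IsPrimeCon P) : ¬ P 1 0 := fun h => by
  obtain ⟨a, b, hab⟩ := hP.1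
  have h0 : ∀ x, P x 0 := fun x => by simpa using P.mul (P.refl x) h
  exact hab (P.trans (h0 a) (P.symm (h0 b)))

theorem rel_zero_or_rel_zero_of_mul (hP : IsPrimeCon P) {a b : R} (h : P (a * b) 0) :
    P a 0 ∨ P b 0 :=
  hP.2 a 0 b 0 (by simpa using h)

theorem rel_zero_of_pow (hP : IsPrimeCon P) {a : R} {n : ℕ} (h : P (a ^ n) 0) : P a 0 := by
  induction n with
  | zero => exact absurd (by simpa using h) hP.not_one_rel_zero
  | succ n ih => exact (hP.rel_zero_or_rel_zero_of_mul (pow_succ a n ▸ h)).elim ih id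

theorem rel_of_mul_left (hP : IsPrimeCon P) {a b c : R} (h : P (c * a) (c * b))
    (hc : ¬ P c 0) : P a b :=
  (hP.2 c 0 a b (by simpa using h)).resolve_left hc

theorem add_rel_left_or_right (hP : IsPrimeCon P) (hid : ∀ x : R, x + x = x) (a b : R) :
    P (a + b) a ∨ P (a + b) b := by
  have e : (a + b) * (a + b) + a * b = (a + b) * b + a * (a + b) := calc
    _ = a * a + b * b + (a * b + a * b + a * b) := by ring
    _ = a * a + b * b + (a * b + a * b) := by rw [hid (a * b), hid (a * b)]
    _ = _ := by ring
  exact hP.2 _ _ _ _ (e ▸ P.refl _)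

/-- If `b` is not in the kernel, neither is `S = ∑_{i<n} aⁱ bⁿ⁻¹⁻ⁱ`, and `a S`, `b S` differ
only in the terms `aⁿ`, `bⁿ`; cancel `S`. -/
theorem rel_of_pow_rel (hP : IsPrimeCon P) (hid : ∀ x : R, x + x = x) {a b : R} {n : ℕ}
    (hn : n ≠ 0) (h : P (a ^ n) (b ^ n)) : P a b := by
  obtain ⟨n, rfl⟩ := Nat.exists_eq_add_one_of_ne_zero hn
  by_cases hb : P b 0
  · have hbn : P (b ^ (n + 1)) 0 := by simpa using P.toCon.pow (n + 1) hb
    exact P.trans (hP.rel_zero_of_pow (P.trans h hbn)) (P.symm hb)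
  have hS : ¬ P (∑ i ∈ range (n + 1), a ^ i * b ^ (n - i)) 0 := by
    rw [sum_range_succ', pow_zero, one_mul, Nat.sub_zero, add_comm]
    exact fun hS => hb (hP.rel_zero_of_pow (P.rel_zero_of_add_rel_zero hid hS))
  refine hP.rel_of_mul_left ?_ hS
  rw [mul_comm _ a, mul_comm _ b, mul_sum_pow_mul_pow_left, mul_sum_pow_mul_pow_right]
  exact P.add h (P.refl _)

end IsPrimeCon

theorem AddMonoidAlgebra.add_self_eq_self {A M : Type*} [Semiring A] (hid : ∀ a : A, a + a = a)
    (p : AddMonoidAlgebra A M) : p + p = p := by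
  ext
  simp [hid]

namespace LaurentPolynomial

variable {A : Type*} [CommSemiring A]

theorem rel_C_mul_T_iff (P : RingCon A[T;T⁻¹]) {a b : A} {n m : ℤ} :
    P (C a * T n) (C b * T m) ↔ P (C a * T (n - m)) (C b) := by
  rw [← P.mul_right_rel_iff_of_isUnit (isUnit_T m) (a := C a * T (n - m)), mul_T_assoc,
    sub_add_cancel]

end LaurentPolynomial

namespace IsPrimeCon

open LaurentPolynomial

variable {A : Type*} [CommSemiring A] {P Q : RingCon A[T;T⁻¹]}

theorem exists_rel_C_mul_T (hP : IsPrimeCon P) (hid : ∀ a : A, a + a = a) (f : A[T;T⁻¹]) :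
    ∃ (a : A) (n : ℤ), P f (C a * T n) := by
  induction f using LaurentPolynomial.induction_on' with
  | add f g hf hg =>
    obtain ⟨a, n, hf⟩ := hf
    obtain ⟨b, m, hg⟩ := hg
    rcases hP.add_rel_left_or_right (AddMonoidAlgebra.add_self_eq_self hid) (C a * T n)
      (C b * T m) with h | h
    · exact ⟨a, n, P.trans (P.add hf hg) h⟩
    · exact ⟨b, m, P.trans (P.add hf hg) h⟩
  | C_mul_T n a => exact ⟨a, n, P.refl _⟩

theorem exists_C_mul_T_rel_of_lt (hP : IsPrimeCon P) (hid : ∀ a : A, a + a = a) (hPQ : P < Q) :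
    ∃ (a b : A) (n m : ℤ), Q (C a * T n) (C b * T m) ∧ ¬ P (C a * T n) (C b * T m) := by
  obtain ⟨f, g, hQ, hnP⟩ : ∃ f g, Q f g ∧ ¬ P f g := by
    by_contra! h
    exact hPQ.not_ge fun f g => h f g
  obtain ⟨a, n, hf⟩ := hP.exists_rel_C_mul_T hid f
  obtain ⟨b, m, hg⟩ := hP.exists_rel_C_mul_T hid g
  exact ⟨a, b, n, m, Q.trans (Q.symm (hPQ.le hf)) (Q.trans hQ (hPQ.le hg)),
    fun h => hnP (P.trans hf (P.trans h (P.symm hg)))⟩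

theorem exists_C_mul_T_rel_C_of_lt (hP : IsPrimeCon P) (hid : ∀ a : A, a + a = a) (hPQ : P < Q)
    (hker : ∀ f, Q f 0 → P f 0) (hres : Q.comap C ≤ P.comap C) :
    ∃ (a b : A) (s : ℕ), s ≠ 0 ∧ Q (C a * T s) (C b) ∧ ¬ P (C a * T s) (C b) ∧ ¬ P (C a) 0 := by
  obtain ⟨a, b, n, m, hQ, hnP⟩ := hP.exists_C_mul_T_rel_of_lt hid hPQ
  wlog hmn : m ≤ n generalizing a b n m
  · exact this b a m n (Q.symm hQ) (fun h => hnP (P.symm h)) (le_of_not_ge hmn)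
  obtain ⟨s, hs⟩ := Int.eq_ofNat_of_zero_le (sub_nonneg.2 hmn)
  rw [rel_C_mul_T_iff, hs] at hQ hnP
  refine ⟨a, b, s, ?_, hQ, hnP, fun ha => hnP ?_⟩
  · rintro rfl
    exact hnP (by simpa using hres (by simpa using hQ))
  · have h0 : P (C a * T s) 0 := by simpa using P.mul ha (P.refl (T s))
    exact P.trans h0 (P.symm (hker _ (Q.trans (Q.symm hQ) (hPQ.le h0))))

/-- Modulo `P`, `Tˢ` is the quotient `b / a`; so the `s`-th power of a relation of `Q` is one
between constants, where `P` and `Q` agree. -/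
theorem rel_of_comap_C_le (hP : IsPrimeCon P) (hid : ∀ a : A, a + a = a) (hPQ : P ≤ Q)
    (hres : Q.comap C ≤ P.comap C)
    {a b c d : A} {s t : ℕ} (hs : s ≠ 0) (hab : P (C a * T s) (C b)) (ha : ¬ P (C a) 0)
    (hcd : Q (C c * T t) (C d)) : P (C c * T t) (C d) := by
  have hab' : P (C (a ^ t) * T (t * s)) (C (b ^ t)) := by
    simpa [mul_pow, T_pow] using P.toCon.pow t hab
  have hcd' : Q (C (c ^ s) * T (t * s)) (C (d ^ s)) := by
    have := Q.toCon.pow s hcd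
    rwa [mul_pow, T_pow, ← map_pow, ← map_pow, mul_comm (s : ℤ)] at this
  have h1 : Q (C (a ^ t * d ^ s) * T (t * s)) (C (b ^ t * c ^ s) * T (t * s)) := by
    convert Q.mul (hPQ hab') (Q.symm hcd') using 1 <;> simp only [map_mul] <;> ring
  have h2 : P (C (a ^ t) * C (d ^ s)) (C (b ^ t) * C (c ^ s)) := by
    simpa only [RingCon.comap_rel, map_mul] using
      hres ((Q.mul_right_rel_iff_of_isUnit (isUnit_T _)).1 h1)
  have h3 : P (C (a ^ t) * (C c * T t) ^ s) (C (a ^ t) * C d ^ s) := by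
    have := P.trans (P.mul hab' (P.refl (C (c ^ s)))) (P.symm h2)
    convert this using 1 <;> simp only [mul_pow, T_pow, ← map_pow, mul_comm (s : ℤ)]
    ring
  exact hP.rel_of_pow_rel (AddMonoidAlgebra.add_self_eq_self hid) hs
    (hP.rel_of_mul_left h3 fun h => ha (hP.rel_zero_of_pow (by simpa using h)))

end IsPrimeCon

theorem stmt_9_general (A : Type*) [CommSemiring A] (hidem : ∀ a : A, a + a = a)
    (P₁ P₂ P₃ P₄ : RingCon (AddMonoidAlgebra A ℤ))
    (hp₁ : IsPrimeCon P₁)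
    (hp₃ : IsPrimeCon P₃)
    (h12 : P₁ < P₂) (h23 : P₂ ≤ P₃) (h34 : P₃ < P₄)
    (hker : ∀ p : AddMonoidAlgebra A ℤ,
      (P₁ p 0 ↔ P₂ p 0) ∧ (P₁ p 0 ↔ P₃ p 0) ∧ (P₁ p 0 ↔ P₄ p 0)) :
    (∃ a b : A, P₂ (AddMonoidAlgebra.singleZeroRingHom a)
        (AddMonoidAlgebra.singleZeroRingHom b) ∧
      ¬ P₁ (AddMonoidAlgebra.singleZeroRingHom a)
        (AddMonoidAlgebra.singleZeroRingHom b)) ∨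
    (∃ a b : A, P₄ (AddMonoidAlgebra.singleZeroRingHom a)
        (AddMonoidAlgebra.singleZeroRingHom b) ∧
      ¬ P₃ (AddMonoidAlgebra.singleZeroRingHom a)
        (AddMonoidAlgebra.singleZeroRingHom b)) := by
  by_contra! ⟨hres₁₂, hres₃₄⟩
  obtain ⟨a, b, s, hs, hab, -, ha⟩ := hp₁.exists_C_mul_T_rel_C_of_lt hidem h12
    (fun p => (hker p).1.2) hres₁₂
  obtain ⟨c, d, t, -, hcd, hncd, -⟩ := hp₃.exists_C_mul_T_rel_C_of_lt hidem h34
    (fun p h => (hker p).2.1.1 ((hker p).2.2.2 h)) hres₃₄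
  exact hncd (hp₃.rel_of_comap_C_le hidem h34.le hres₃₄ hs (h23 hab)
    (fun h => ha ((hker _).2.1.2 h)) hcd)

/-- For primes `P₁ ⊊ P₂ ⊆ P₃ ⊊ P₄` of the Laurent polynomial semiring `A(x)`
with equal kernels, at least one of the restrictions `P₁|_A ⊆ P₂|_A`,
`P₃|_A ⊆ P₄|_A` is strict. -/
theorem stmt_9 (A : Type*) [CommSemiring A] (hidem : ∀ a : A, a + a = a)
    (P₁ P₂ P₃ P₄ : RingCon (AddMonoidAlgebra A ℤ))
    (hp₁ : IsPrimeCon P₁) (hp₂ : IsPrimeCon P₂)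
    (hp₃ : IsPrimeCon P₃) (hp₄ : IsPrimeCon P₄)
    (h12 : P₁ < P₂) (h23 : P₂ ≤ P₃) (h34 : P₃ < P₄)
    (hker : ∀ p : AddMonoidAlgebra A ℤ,
      (P₁ p 0 ↔ P₂ p 0) ∧ (P₁ p 0 ↔ P₃ p 0) ∧ (P₁ p 0 ↔ P₄ p 0)) :
    (∃ a b : A, P₂ (AddMonoidAlgebra.singleZeroRingHom a)
        (AddMonoidAlgebra.singleZeroRingHom b) ∧
      ¬ P₁ (AddMonoidAlgebra.singleZeroRingHom a)
        (AddMonoidAlgebra.singleZeroRingHom b)) ∨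
    (∃ a b : A, P₄ (AddMonoidAlgebra.singleZeroRingHom a)
        (AddMonoidAlgebra.singleZeroRingHom b) ∧
      ¬ P₃ (AddMonoidAlgebra.singleZeroRingHom a)
        (AddMonoidAlgebra.singleZeroRingHom b)) :=
  stmt_9_general A hidem P₁ P₂ P₃ P₄ hp₁ hp₃ h12 h23 h34 hker
end

section
/- Let A be an additively idempotent commutative semiring and let p_1 ⊂ p_2 ⊂ ... ⊂ p_k be a strictly increasing chain of prime congruences in the Laurent polynomial semiring A(x), all having the same kernel. Then in the restricted chain p_1|_A ⊆ p_2|_A ⊆ ... ⊆ p_k|_A, equality of consecutive terms occurs at most once. -/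
/-!
Modulo a prime congruence `P` of the idempotent semiring `A(x)`, addition is selective
(`f + g ≡ f` or `f + g ≡ g`), the quotient is a domain, and every Laurent polynomial is
congruent to a monomial. So if `P ⊊ Q` have the same restriction to `A`, then `Q` identifies
some `a xᵉ` (`e > 0`) with a constant `b` while `P` does not.

Given two such steps `P ⊊ Q ⊆ P' ⊊ Q'`, the relation `a xᵉ = b` of the first holds in `P'`,
and `b` is not in the common kernel. It lets one eliminate `x`: a relation `c x^e' = d` of
`Q'` turns into the constant relation `a^e' dᵉ = cᵉ b^e'`, which descends to `P'` because the
restrictions agree. Running the elimination backwards in `P'` (cancel `b^e'`, then take `e`-th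
roots, which is possible in a selective domain) gives `c x^e' = d` in `P'`, a contradiction.
-/

theorem pow_left_injective_of_add_eq_or {S : Type*} [Semiring S] [IsDomain S]
    (htotal : ∀ a b : S, a + b = a ∨ a + b = b) {n : ℕ} (hn : n ≠ 0) {u v : S}
    (h : u ^ n = v ^ n) : u = v := by
  let := IdemSemiring.ofSemiring fun a : S => (htotal a a).elim id id
  wlog hvu : v ≤ u generalizing u v
  · have huv : u ≤ v :=
      add_eq_right_iff_le.mp ((htotal u v).resolve_left (mt add_eq_left_iff_le.mp hvu))
    exact (this h.symm huv).symm
  rcases eq_or_ne v 0 with rfl | hv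
  · exact pow_eq_zero_iff hn |>.mp (h.trans (zero_pow hn))
  obtain ⟨m, rfl⟩ := Nat.exists_eq_succ_of_ne_zero hn
  have hmid : u * v ^ m = v * v ^ m := by
    refine le_antisymm ?_ (mul_le_mul_left hvu _)
    calc u * v ^ m ≤ u * u ^ m := mul_le_mul_right (pow_le_pow_left' hvu m) u
      _ = v * v ^ m := by rw [← pow_succ', h, pow_succ']
  exact mul_right_cancel₀ (pow_ne_zero m hv) hmid

theorem IsUnit.pow_mul_pow_eq_iff_of_mul_pow_eq {M : Type*} [CommMonoid M] {x α β γ δ : M}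
    (hx : IsUnit x) {e e' : ℕ} (hβ : α * x ^ e = β) :
    (γ * x ^ e') ^ e * β ^ e' = δ ^ e * β ^ e' ↔ α ^ e' * δ ^ e = γ ^ e * β ^ e' := by
  subst hβ
  rw [← (hx.pow (e * e')).mul_left_inj (b := α ^ e' * δ ^ e), eq_comm]
  simp only [mul_pow, ← pow_mul, mul_comm e' e, mul_assoc, mul_comm, mul_left_comm]

theorem RingCon.rel_mul_left_iff_of_isUnit {R : Type*} [Semiring R] (C : RingCon R) {u : R}
    (hu : IsUnit u) {x y : R} : C (u * x) (u * y) ↔ C x y := by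
  simp only [← RingCon.eq, RingCon.coe_mul]
  exact (hu.map C.mk').mul_right_inj

namespace IsPrimeCon

variable {R : Type*} [CommSemiring R] {P : RingCon R}

theorem quotient_eq_or (hP : IsPrimeCon P) {a₁ a₂ b₁ b₂ : P.Quotient}
    (h : a₁ * b₁ + a₂ * b₂ = a₁ * b₂ + a₂ * b₁) : a₁ = a₂ ∨ b₁ = b₂ := by
  induction a₁ using Quotient.inductionOn'
  induction a₂ using Quotient.inductionOn'
  induction b₁ using Quotient.inductionOn'
  induction b₂ using Quotient.inductionOn'
  exact hP.2 _ _ _ _ (Quotient.exact' h) |>.imp Quotient.sound' Quotient.sound'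

theorem isDomain (hP : IsPrimeCon P) : IsDomain P.Quotient :=
  have : IsRightCancelMulZero P.Quotient :=
    ⟨fun {c} hc a b hab => (hP.quotient_eq_or (a₁ := a) (a₂ := b) (b₁ := c) (b₂ := 0)
      (by simpa using hab)).resolve_right hc⟩
  { IsRightCancelMulZero.to_isCancelMulZero with
    exists_pair_ne := by
      obtain ⟨a, b, hab⟩ := hP.1
      exact ⟨a, b, mt (RingCon.eq P).mp hab⟩ }

theorem quotient_add_eq_or (hidem : ∀ a : R, a + a = a) (hP : IsPrimeCon P)
    (a b : P.Quotient) : a + b = a ∨ a + b = b := by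
  have hidem' : ∀ x : P.Quotient, x + x = x := by
    intro x
    induction x using Quotient.inductionOn'
    exact congrArg _ (hidem _)
  refine hP.quotient_eq_or ?_
  calc (a + b) * (a + b) + a * b = a * a + b * b + (a * b + a * b) + a * b := by ring
    _ = a * a + b * b + (a * b + a * b) := by rw [hidem', add_assoc, hidem']
    _ = (a + b) * b + a * (a + b) := by ring

theorem rel_add_left_or_right (hidem : ∀ a : R, a + a = a) (hP : IsPrimeCon P) (a b : R) :
    P (a + b) a ∨ P (a + b) b := by
  simpa only [← RingCon.eq, RingCon.coe_add] using hP.quotient_add_eq_or hidem a b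

end IsPrimeCon

open AddMonoidAlgebra

namespace AddMonoidAlgebra

theorem add_self_eq_of_add_self_eq {R M : Type*} [Semiring R] (hidem : ∀ r : R, r + r = r)
    (f : AddMonoidAlgebra R M) : f + f = f := by
  ext m
  exact hidem _

theorem single_zero_eq_singleZeroRingHom {R M : Type*} [Semiring R] [AddMonoid M] (r : R) :
    (single 0 r : AddMonoidAlgebra R M) = singleZeroRingHom r := rfl

variable {A : Type*} [CommSemiring A]

theorem isUnit_single_one (n : ℤ) : IsUnit (single n 1 : AddMonoidAlgebra A ℤ) :=
  IsUnit.of_mul_eq_one (single (-n) 1) <| by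
    rw [single_mul_single, add_neg_cancel, mul_one, one_def]

theorem single_natCast_eq (e : ℕ) (a : A) :
    (single (e : ℤ) a : AddMonoidAlgebra A ℤ) = single 0 a * single 1 1 ^ e := by
  rw [single_pow, single_mul_single, one_pow, mul_one, zero_add, nsmul_one]

end AddMonoidAlgebra

section LaurentPolynomial

variable {A : Type*} [CommSemiring A]

namespace RingCon

variable (C : RingCon (AddMonoidAlgebra A ℤ))

theorem isUnit_coe_single_one : IsUnit ((single 1 1 : AddMonoidAlgebra A ℤ) : C.Quotient) :=
  (isUnit_single_one 1).map C.mk'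

theorem rel_single_add_iff (t n m : ℤ) (a b : A) :
    C (single (t + n) a) (single (t + m) b) ↔ C (single n a) (single m b) := by
  rw [← one_mul a, ← one_mul b, ← single_mul_single, ← single_mul_single, one_mul, one_mul]
  exact C.rel_mul_left_iff_of_isUnit (isUnit_single_one t)

variable {C}

theorem rel_single_zero_of_rel_single {e e' : ℕ} {a b c d : A}
    (hab : C (single e a) (single 0 b)) (hcd : C (single e' c) (single 0 d)) :
    C (singleZeroRingHom (a ^ e' * d ^ e)) (singleZeroRingHom (c ^ e * b ^ e')) := by
  simp only [← RingCon.eq, single_natCast_eq, map_mul, map_pow, RingCon.coe_mul, RingCon.coe_pow,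
    single_zero_eq_singleZeroRingHom] at hab hcd ⊢
  exact ((C.isUnit_coe_single_one).pow_mul_pow_eq_iff_of_mul_pow_eq hab).mp (by rw [hcd])

end RingCon

namespace IsPrimeCon

variable {P Q : RingCon (AddMonoidAlgebra A ℤ)}

theorem exists_rel_single (hidem : ∀ a : A, a + a = a) (hP : IsPrimeCon P)
    (f : AddMonoidAlgebra A ℤ) : ∃ (n : ℤ) (a : A), P f (single n a) := by
  induction f using AddMonoidAlgebra.induction with
  | zero => exact ⟨0, 0, by rw [single_zero]; exact P.refl 0⟩
  | single_add n b f _ _ ih =>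
    obtain ⟨m, a, hfa⟩ := ih
    rcases hP.rel_add_left_or_right (add_self_eq_of_add_self_eq hidem) (single n b) f with h | h
    · exact ⟨n, b, h⟩
    · exact ⟨m, a, P.trans h hfa⟩

theorem exists_single_natCast_rel_not_rel_of_single
    (hres : Q.comap singleZeroRingHom ≤ P.comap singleZeroRingHom) {n m : ℤ} {a b : A}
    (hQ : Q (single n a) (single m b)) (hP : ¬ P (single n a) (single m b)) :
    ∃ (e : ℕ) (a b : A), e ≠ 0 ∧ Q (single e a) (single 0 b) ∧
      ¬ P (single e a) (single 0 b) := by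
  wlog hmn : m ≤ n generalizing n m a b
  · exact this (Q.symm hQ) (fun h => hP (P.symm h)) (le_of_not_ge hmn)
  obtain ⟨e, rfl⟩ := Int.le.dest hmn
  rw [← add_zero m, add_assoc, zero_add, RingCon.rel_single_add_iff] at hQ hP
  refine ⟨e, a, b, fun he => hP ?_, hQ, hP⟩
  subst he
  exact hres hQ

theorem exists_single_natCast_rel_not_rel (hidem : ∀ a : A, a + a = a) (hP : IsPrimeCon P)
    (hPQ : P < Q) (hres : Q.comap singleZeroRingHom ≤ P.comap singleZeroRingHom) :
    ∃ (e : ℕ) (a b : A), e ≠ 0 ∧ Q (single e a) (single 0 b) ∧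
      ¬ P (single e a) (single 0 b) := by
  obtain ⟨f, g, hQfg, hPfg⟩ : ∃ f g, Q f g ∧ ¬ P f g := by
    by_contra! h
    exact hPQ.not_ge fun f g => h f g
  obtain ⟨n, a, hfa⟩ := hP.exists_rel_single hidem f
  obtain ⟨m, b, hgb⟩ := hP.exists_rel_single hidem g
  refine exists_single_natCast_rel_not_rel_of_single hres (n := n) (m := m) (a := a) (b := b) ?_ ?_
  · exact Q.trans (Q.symm (hPQ.le hfa)) (Q.trans hQfg (hPQ.le hgb))
  · exact fun h => hPfg (P.trans hfa (P.trans h (P.symm hgb)))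

theorem rel_single_of_comap_le (hidem : ∀ a : A, a + a = a) (hP : IsPrimeCon P) (hPQ : P ≤ Q)
    (hres : Q.comap singleZeroRingHom ≤ P.comap singleZeroRingHom) {e e' : ℕ} (he : e ≠ 0)
    {a b c d : A} (hab : P (single e a) (single 0 b)) (hb : ¬ P (single 0 b) 0)
    (hcd : Q (single e' c) (single 0 d)) : P (single e' c) (single 0 d) := by
  have hP' : P (singleZeroRingHom (a ^ e' * d ^ e)) (singleZeroRingHom (c ^ e * b ^ e')) :=
    hres (RingCon.rel_single_zero_of_rel_single (hPQ hab) hcd)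
  have := hP.isDomain
  simp only [← RingCon.eq, single_natCast_eq, map_mul, map_pow, RingCon.coe_mul,
    RingCon.coe_pow, RingCon.coe_zero, single_zero_eq_singleZeroRingHom] at hab hb hP' ⊢
  refine pow_left_injective_of_add_eq_or
    (hP.quotient_add_eq_or (add_self_eq_of_add_self_eq hidem)) he ?_
  exact mul_right_cancel₀ (pow_ne_zero e' hb)
    ((P.isUnit_coe_single_one.pow_mul_pow_eq_iff_of_mul_pow_eq hab).mpr hP')

theorem not_comap_le_of_comap_le {P' Q' : RingCon (AddMonoidAlgebra A ℤ)}
    (hidem : ∀ a : A, a + a = a) (hP : IsPrimeCon P) (hP' : IsPrimeCon P') (hPQ : P < Q)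
    (hQP' : Q ≤ P') (hP'Q' : P' < Q') (hker : ∀ f, P' f 0 → P f 0)
    (hres : Q.comap singleZeroRingHom ≤ P.comap singleZeroRingHom) :
    ¬ Q'.comap singleZeroRingHom ≤ P'.comap singleZeroRingHom := by
  intro hres'
  obtain ⟨e, a, b, he, hQab, hPab⟩ := hP.exists_single_natCast_rel_not_rel hidem hPQ hres
  obtain ⟨e', c, d, -, hQcd, hPcd⟩ := hP'.exists_single_natCast_rel_not_rel hidem hP'Q' hres'
  have hb : ¬ P' (single 0 b) 0 := fun hb' => by
    have hbP : P (single 0 b) 0 := hker _ hb'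
    have haP : P (single e a) 0 := hker _ (hQP' (Q.trans hQab (hPQ.le hbP)))
    exact hPab (P.trans haP (P.symm hbP))
  exact hPcd (hP'.rel_single_of_comap_le hidem hP'Q'.le hres' he (hQP' hQab) hb hQcd)

end IsPrimeCon

end LaurentPolynomial

/-- In a strictly increasing chain of primes of `A(x)` with common kernel, the
restricted chain to `A` has equality of consecutive terms at most once. -/
theorem stmt_10 (A : Type*) [CommSemiring A] (hidem : ∀ a : A, a + a = a)
    (k : ℕ) (c : Fin (k + 1) → RingCon (AddMonoidAlgebra A ℤ))
    (hmono : StrictMono c) (hprime : ∀ i, IsPrimeCon (c i))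
    (hker : ∀ i (p : AddMonoidAlgebra A ℤ), c i p 0 ↔ c 0 p 0) :
    ∀ i j : Fin k,
      (∀ a b : A, c i.castSucc (AddMonoidAlgebra.singleZeroRingHom a)
          (AddMonoidAlgebra.singleZeroRingHom b) ↔
        c i.succ (AddMonoidAlgebra.singleZeroRingHom a)
          (AddMonoidAlgebra.singleZeroRingHom b)) →
      (∀ a b : A, c j.castSucc (AddMonoidAlgebra.singleZeroRingHom a)
          (AddMonoidAlgebra.singleZeroRingHom b) ↔
        c j.succ (AddMonoidAlgebra.singleZeroRingHom a)
          (AddMonoidAlgebra.singleZeroRingHom b)) →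
      i = j := by
  intro i j hi hj
  wlog hij : i ≤ j generalizing i j
  · exact (this j i hj hi (le_of_not_ge hij)).symm
  refine hij.eq_or_lt.resolve_right fun hlt => ?_
  have hstep : ∀ s : Fin k, c s.castSucc < c s.succ := fun s => hmono s.castSucc_lt_succ
  exact (hprime i.castSucc).not_comap_le_of_comap_le hidem (hprime j.castSucc) (hstep i)
    (hmono.monotone (Fin.succ_le_castSucc_iff.mpr hlt)) (hstep j)
    (fun f h => (hker _ f).2 ((hker _ f).1 h)) (fun a b h => (hi a b).2 h)
    (fun a b h => (hj a b).2 h)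
end

section
/- Let F be a semifield and C ⊆ F × F a reflexive, symmetric relation closed under coordinatewise addition and multiplication (i.e., (a1,b1),(a2,b2) ∈ C imply (a1+a2,b1+b2) ∈ C and (a1a2,b1b2) ∈ C). Then C is transitive, hence a congruence. -/
theorem rel_trans_of_ne_zero {G : Type*} [GroupWithZero G] {C : G → G → Prop}
    (hrefl : ∀ a, C a a) (hmul : ∀ a₁ b₁ a₂ b₂, C a₁ b₁ → C a₂ b₂ → C (a₁ * a₂) (b₁ * b₂))
    {a b c : G} (hb : b ≠ 0) (hab : C a b) (hbc : C b c) : C a c := by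
  have hab' : C (a * b⁻¹) 1 := by
    simpa only [mul_inv_cancel₀ hb] using hmul a b b⁻¹ b⁻¹ hab (hrefl b⁻¹)
  simpa only [inv_mul_cancel_right₀ hb, one_mul] using hmul _ _ _ _ hab' hbc

theorem rel_trans_through_zero {M : Type*} [AddZeroClass M] {C : M → M → Prop}
    (hadd : ∀ a₁ b₁ a₂ b₂, C a₁ b₁ → C a₂ b₂ → C (a₁ + a₂) (b₁ + b₂))
    {a c : M} (ha : C a 0) (hc : C 0 c) : C a c := by
  simpa only [add_zero, zero_add] using hadd _ _ _ _ ha hc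

theorem stmt_12_general (F : Type*) [Semifield F] (C : F → F → Prop)
    (hrefl : ∀ a : F, C a a)
    (hadd : ∀ a₁ b₁ a₂ b₂ : F, C a₁ b₁ → C a₂ b₂ → C (a₁ + a₂) (b₁ + b₂))
    (hmul : ∀ a₁ b₁ a₂ b₂ : F, C a₁ b₁ → C a₂ b₂ → C (a₁ * a₂) (b₁ * b₂)) :
    ∀ a b c : F, C a b → C b c → C a c := by
  intro a b c hab hbc
  rcases eq_or_ne b 0 with rfl | hb
  · exact rel_trans_through_zero hadd hab hbc
  · exact rel_trans_of_ne_zero hrefl hmul hb hab hbc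

/-- In a semifield, a reflexive symmetric relation closed under coordinatewise
addition and multiplication is transitive. -/
theorem stmt_12 (F : Type*) [Semifield F] (C : F → F → Prop)
    (hrefl : ∀ a : F, C a a) (hsymm : ∀ a b : F, C a b → C b a)
    (hadd : ∀ a₁ b₁ a₂ b₂ : F, C a₁ b₁ → C a₂ b₂ → C (a₁ + a₂) (b₁ + b₂))
    (hmul : ∀ a₁ b₁ a₂ b₂ : F, C a₁ b₁ → C a₂ b₂ → C (a₁ * a₂) (b₁ * b₂)) :
    ∀ a b c : F, C a b → C b c → C a c :=
  stmt_12_general F C hrefl hadd hmul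
end

section
/- Let R be a cancellative commutative semiring, C a congruence of R, and Frac(R) its semifield of fractions. A pair (a,b) ∈ Frac(R) × Frac(R) lies in the congruence generated by C in Frac(R) if and only if there exists s ∈ R, s ≠ 0, with (sa, sb) ∈ C. In particular, the generated congruence is proper if and only if ker(C) = {0}. -/
namespace RingCon

theorem exists_not_rel_iff_not_rel_one_zero {A : Type*} [NonAssocSemiring A] (c : RingCon A) :
    (∃ x y, ¬ c x y) ↔ ¬ c 1 0 := by
  refine ⟨fun ⟨x, y, hxy⟩ h10 => hxy ?_, fun h => ⟨1, 0, h⟩⟩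
  have h_zero : ∀ z, c z 0 := fun z => by simpa using c.mul (c.refl z) h10
  exact c.trans (h_zero x) (c.symm (h_zero y))

section FracRel

variable {R F : Type*} [CommSemiring R] [CommSemiring F] {f : R →+* F} {C : RingCon R}

def FracRel (f : R →+* F) (C : RingCon R) (x y : F) : Prop :=
  ∃ s : R, s ≠ 0 ∧ ∃ a b : R, C a b ∧ f s * x = f a ∧ f s * y = f b

theorem FracRel.of_rel [Nontrivial R] {a b : R} (h : C a b) : FracRel f C (f a) (f b) :=
  ⟨1, one_ne_zero, a, b, h, by simp, by simp⟩

theorem FracRel.symm {x y : F} : FracRel f C x y → FracRel f C y x :=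
  fun ⟨s, hs, a, b, hab, hx, hy⟩ => ⟨s, hs, b, a, C.symm hab, hy, hx⟩

theorem FracRel.trans [NoZeroDivisors R] (hinj : Function.Injective f) {x y z : F} :
    FracRel f C x y → FracRel f C y z → FracRel f C x z := by
  rintro ⟨s, hs, a, b, hab, hx, hy⟩ ⟨t, ht, c, d, hcd, hy', hz⟩
  have hbc : t * b = s * c := hinj (by rw [map_mul, map_mul, ← hy, ← hy']; ring)
  have hab' : C (t * a) (s * c) := hbc ▸ C.mul (C.refl t) hab
  refine ⟨s * t, mul_ne_zero hs ht, t * a, s * d, C.trans hab' (C.mul (C.refl s) hcd), ?_, ?_⟩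
  · rw [map_mul, map_mul, ← hx]; ring
  · rw [map_mul, map_mul, ← hz]; ring

theorem FracRel.add [NoZeroDivisors R] {w x y z : F} :
    FracRel f C w x → FracRel f C y z → FracRel f C (w + y) (x + z) := by
  rintro ⟨s, hs, a, b, hab, hw, hx⟩ ⟨t, ht, c, d, hcd, hy, hz⟩
  refine ⟨s * t, mul_ne_zero hs ht, t * a + s * c, t * b + s * d,
    C.add (C.mul (C.refl t) hab) (C.mul (C.refl s) hcd), ?_, ?_⟩
  · rw [map_mul, map_add, map_mul, map_mul, ← hw, ← hy]; ring
  · rw [map_mul, map_add, map_mul, map_mul, ← hx, ← hz]; ring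

theorem FracRel.mul [NoZeroDivisors R] {w x y z : F} :
    FracRel f C w x → FracRel f C y z → FracRel f C (w * y) (x * z) := by
  rintro ⟨s, hs, a, b, hab, hw, hx⟩ ⟨t, ht, c, d, hcd, hy, hz⟩
  refine ⟨s * t, mul_ne_zero hs ht, a * c, b * d, C.mul hab hcd, ?_, ?_⟩
  · rw [map_mul, map_mul, ← hw, ← hy]; ring
  · rw [map_mul, map_mul, ← hx, ← hz]; ring

theorem fracRel_one_zero_iff (hinj : Function.Injective f) :
    FracRel f C 1 0 ↔ ∃ a, a ≠ 0 ∧ C a 0 := by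
  constructor
  · rintro ⟨s, hs, a, b, hab, h1, h0⟩
    have hsa : s = a := hinj (by rw [← h1, mul_one])
    have hb : b = 0 := hinj (by rw [← h0, mul_zero, map_zero])
    exact ⟨a, hsa ▸ hs, hb ▸ hab⟩
  · rintro ⟨a, ha, hC⟩
    exact ⟨a, ha, a, 0, hC, mul_one _, by rw [mul_zero, map_zero]⟩

end FracRel

section Semifield

variable {R F : Type*} [CommSemiring R] [Semifield F] {f : R →+* F}

theorem FracRel.refl (hfrac : ∀ x : F, ∃ r s : R, s ≠ 0 ∧ x = f r / f s)
    (hinj : Function.Injective f) (C : RingCon R) (x : F) : FracRel f C x x := by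
  obtain ⟨a, s, hs, rfl⟩ := hfrac x
  have hx : f s * (f a / f s) = f a := mul_div_cancel₀ _ ((map_ne_zero_iff f hinj).mpr hs)
  exact ⟨s, hs, a, a, C.refl a, hx, hx⟩

def fracCon [NoZeroDivisors R] (hfrac : ∀ x : F, ∃ r s : R, s ≠ 0 ∧ x = f r / f s)
    (hinj : Function.Injective f) (C : RingCon R) : RingCon F where
  r := FracRel f C
  iseqv := ⟨FracRel.refl hfrac hinj C, FracRel.symm, FracRel.trans hinj⟩
  add' := FracRel.add
  mul' := FracRel.mul

theorem ringConGen_eq_fracCon [NoZeroDivisors R] (hfrac : ∀ x : F, ∃ r s : R, s ≠ 0 ∧ x = f r / f s)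
    (hinj : Function.Injective f) (C : RingCon R) :
    ringConGen (fun u v : F => ∃ a b : R, C a b ∧ u = f a ∧ v = f b) = fracCon hfrac hinj C := by
  have : Nontrivial R := f.domain_nontrivial
  refine le_antisymm (ringConGen_le.mpr ?_) fun x y ⟨s, hs, a, b, hab, hx, hy⟩ => ?_
  · rintro u v ⟨a, b, hab, rfl, rfl⟩
    exact FracRel.of_rel hab
  · set G := ringConGen (fun u v : F => ∃ a b : R, C a b ∧ u = f a ∧ v = f b)
    have hsab : G (f s * x) (f s * y) := hx ▸ hy ▸ RingConGen.Rel.of _ _ ⟨a, b, hab, rfl, rfl⟩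
    have hfs : f s ≠ 0 := (map_ne_zero_iff f hinj).mpr hs
    simpa [inv_mul_cancel_left₀ hfs] using G.mul (G.refl (f s)⁻¹) hsab

end Semifield

end RingCon

theorem stmt_13_general (R F : Type*) [CommSemiring R] [Semifield F]
    (f : R →+* F) (hinj : Function.Injective f)
    (hfrac : ∀ x : F, ∃ r s : R, s ≠ 0 ∧ x = f r / f s)
    (C : RingCon R) :
    (∀ x y : F,
      ringConGen (fun u v : F => ∃ a b : R, C a b ∧ u = f a ∧ v = f b) x y ↔
        ∃ s : R, s ≠ 0 ∧ ∃ a b : R, C a b ∧ f s * x = f a ∧ f s * y = f b) ∧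
    ((∃ x y : F,
        ¬ ringConGen (fun u v : F => ∃ a b : R, C a b ∧ u = f a ∧ v = f b) x y) ↔
      ∀ a : R, C a 0 → a = 0) := by
  have : NoZeroDivisors R := hinj.noZeroDivisors f (map_zero f) (map_mul f)
  rw [RingCon.ringConGen_eq_fracCon hfrac hinj C, RingCon.exists_not_rel_iff_not_rel_one_zero]
  refine ⟨fun x y => Iff.rfl, ?_⟩
  change ¬ RingCon.FracRel f C 1 0 ↔ _
  rw [RingCon.fracRel_one_zero_iff hinj]
  simp only [not_exists, not_and, ne_eq, not_imp_not]

/-- For a cancellative commutative semiring `R` with semifield of fractions `F`,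
a pair lies in the congruence of `F` generated by a congruence `C` of `R` iff it
can be multiplied into `C` by some nonzero `s ∈ R`; and the generated congruence
is proper iff `ker C = {0}`. -/
theorem stmt_13 (R F : Type*) [CommSemiring R] [Semifield F]
    (hcanc : ∀ a b c : R, a * b = a * c → a = 0 ∨ b = c)
    (f : R →+* F) (hinj : Function.Injective f)
    (hfrac : ∀ x : F, ∃ r s : R, s ≠ 0 ∧ x = f r / f s)
    (C : RingCon R) :
    (∀ x y : F,
      ringConGen (fun u v : F => ∃ a b : R, C a b ∧ u = f a ∧ v = f b) x y ↔
        ∃ s : R, s ≠ 0 ∧ ∃ a b : R, C a b ∧ f s * x = f a ∧ f s * y = f b) ∧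
    ((∃ x y : F,
        ¬ ringConGen (fun u v : F => ∃ a b : R, C a b ∧ u = f a ∧ v = f b) x y) ↔
      ∀ a : R, C a 0 → a = 0) :=
  stmt_13_general R F f hinj hfrac C
end

section
/- Let R be a cancellative commutative semiring and C a quotient-cancellative congruence with trivial kernel. Then C is a prime congruence of R if and only if the congruence generated by C in Frac(R) is a prime congruence of Frac(R). Moreover, a congruence Q of Frac(R) is prime if and only if its restriction to R is prime. -/
/-- The restriction of a congruence of `Frac R` to `R`, as a congruence of `R`. -/
def restrictCon {R F : Type*} [CommSemiring R] [Semifield F] (f : R →+* F)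
    (Q : RingCon F) : RingCon R where
  r a b := Q (f a) (f b)
  iseqv := ⟨fun _ => Q.refl _, Q.symm, Q.trans⟩
  add' := fun h₁ h₂ => by simpa [map_add] using Q.add h₁ h₂
  mul' := fun h₁ h₂ => by simpa [map_mul] using Q.mul h₁ h₂

namespace RingCon

theorem rel_of_rel_one_zero {A : Type*} [CommSemiring A] {P : RingCon A} (h : P 1 0)
    (a b : A) : P a b := by
  have collapse : ∀ x : A, P x 0 := fun x => by simpa using P.mul (P.refl x) h
  exact P.trans (collapse a) (P.symm (collapse b))

theorem exists_not_rel_iff_not_rel_one_zero_s15 {A : Type*} [CommSemiring A] (P : RingCon A) :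
    (∃ a b : A, ¬ P a b) ↔ ¬ P 1 0 :=
  ⟨fun ⟨a, b, hab⟩ h => hab (rel_of_rel_one_zero h a b), fun h => ⟨1, 0, h⟩⟩

theorem rel_of_mul_rel_mul {A : Type*} [Semifield A] (P : RingCon A) {c x y : A} (hc : c ≠ 0)
    (h : P (c * x) (c * y)) : P x y := by
  simpa [inv_mul_cancel_left₀ hc] using P.mul (P.refl c⁻¹) h

end RingCon

theorem isPrimeCon_iff {A : Type*} [CommSemiring A] (P : RingCon A) :
    IsPrimeCon P ↔ ¬ P 1 0 ∧ ∀ a₁ a₂ b₁ b₂ : A,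
      P (a₁ * b₁ + a₂ * b₂) (a₁ * b₂ + a₂ * b₁) → P a₁ a₂ ∨ P b₁ b₂ := by
  rw [IsPrimeCon, P.exists_not_rel_iff_not_rel_one_zero_s15]

section FractionSemifield

variable {R F : Type*} [CommSemiring R] [Semifield F] (f : R →+* F)

theorem restrictCon_apply (Q : RingCon F) (a b : R) : restrictCon f Q a b ↔ Q (f a) (f b) :=
  Iff.rfl

variable {f} (hinj : Function.Injective f)
  (hfrac : ∀ x : F, ∃ r s : R, s ≠ 0 ∧ x = f r / f s)
include hinj hfrac

theorem exists_map_mul_eq_map (u : F) : ∃ s p : R, f s ≠ 0 ∧ f s * u = f p := by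
  obtain ⟨r, s, hs, rfl⟩ := hfrac u
  have hfs : f s ≠ 0 := (map_ne_zero_iff f hinj).mpr hs
  exact ⟨s, r, hfs, mul_div_cancel₀ _ hfs⟩

theorem exists_map_mul_eq_map_pair (u₁ u₂ : F) :
    ∃ s p₁ p₂ : R, f s ≠ 0 ∧ f s * u₁ = f p₁ ∧ f s * u₂ = f p₂ := by
  obtain ⟨s₁, p₁, hs₁, h₁⟩ := exists_map_mul_eq_map hinj hfrac u₁
  obtain ⟨s₂, p₂, hs₂, h₂⟩ := exists_map_mul_eq_map hinj hfrac u₂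
  refine ⟨s₁ * s₂, s₂ * p₁, s₁ * p₂, by simp [hs₁, hs₂], ?_, ?_⟩
  · rw [map_mul, map_mul, ← h₁]; ring
  · rw [map_mul, map_mul, ← h₂]; ring

theorem isPrimeCon_iff_restrictCon (Q : RingCon F) :
    IsPrimeCon Q ↔ IsPrimeCon (restrictCon f Q) := by
  rw [isPrimeCon_iff, isPrimeCon_iff]
  simp only [restrictCon_apply, map_one, map_zero, map_add, map_mul]
  refine and_congr_right fun _ => ⟨fun hQ a₁ a₂ b₁ b₂ => hQ _ _ _ _, fun hR u₁ u₂ v₁ v₂ h => ?_⟩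
  obtain ⟨s, a₁, a₂, hs, ha₁, ha₂⟩ := exists_map_mul_eq_map_pair hinj hfrac u₁ u₂
  obtain ⟨t, b₁, b₂, ht, hb₁, hb₂⟩ := exists_map_mul_eq_map_pair hinj hfrac v₁ v₂
  have twisted : Q (f a₁ * f b₁ + f a₂ * f b₂) (f a₁ * f b₂ + f a₂ * f b₁) := by
    convert Q.mul (Q.refl (f s * f t)) h using 1
    · rw [← ha₁, ← ha₂, ← hb₁, ← hb₂]; ring
    · rw [← ha₁, ← ha₂, ← hb₁, ← hb₂]; ring
  refine (hR _ _ _ _ twisted).imp (fun h₁ => ?_) (fun h₂ => ?_)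
  · exact Q.rel_of_mul_rel_mul hs (by rwa [ha₁, ha₂])
  · exact Q.rel_of_mul_rel_mul ht (by rwa [hb₁, hb₂])

def extendCon (C : RingCon R) : RingCon F where
  r u v := ∃ s p q : R, f s ≠ 0 ∧ f s * u = f p ∧ f s * v = f q ∧ C p q
  iseqv := by
    refine ⟨fun u => ?_, fun ⟨s, p, q, hs, hu, hv, h⟩ => ⟨s, q, p, hs, hv, hu, C.symm h⟩, ?_⟩
    · obtain ⟨s, p, hs, hu⟩ := exists_map_mul_eq_map hinj hfrac u
      exact ⟨s, p, p, hs, hu, hu, C.refl p⟩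
    · rintro u v w ⟨s, p, q, hs, hu, hv, hpq⟩ ⟨t, q', r, ht, hv', hw, hqr⟩
      have hq : t * q = s * q' := hinj (by rw [map_mul, map_mul, ← hv, ← hv']; ring)
      refine ⟨s * t, t * p, s * r, by simp [hs, ht], ?_, ?_, ?_⟩
      · rw [map_mul, map_mul, ← hu]; ring
      · rw [map_mul, map_mul, ← hw]; ring
      · exact C.trans (C.mul (C.refl t) hpq) (hq ▸ C.mul (C.refl s) hqr)
  add' := by
    rintro u v u' v' ⟨s, p, q, hs, hu, hv, h⟩ ⟨t, p', q', ht, hu', hv', h'⟩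
    refine ⟨s * t, t * p + s * p', t * q + s * q', by simp [hs, ht], ?_, ?_,
      C.add (C.mul (C.refl t) h) (C.mul (C.refl s) h')⟩
    · simp only [map_add, map_mul, ← hu, ← hu']; ring
    · simp only [map_add, map_mul, ← hv, ← hv']; ring
  mul' := by
    rintro u v u' v' ⟨s, p, q, hs, hu, hv, h⟩ ⟨t, p', q', ht, hu', hv', h'⟩
    refine ⟨s * t, p * p', q * q', by simp [hs, ht], ?_, ?_, C.mul h h'⟩
    · simp only [map_mul, ← hu, ← hu']; ring
    · simp only [map_mul, ← hv, ← hv']; ring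

theorem ringConGen_le_extendCon (C : RingCon R) :
    ringConGen (fun u v : F => ∃ p q : R, C p q ∧ u = f p ∧ v = f q) ≤
      extendCon hinj hfrac C := by
  refine RingCon.ringConGen_le.mpr ?_
  rintro _ _ ⟨p, q, hpq, rfl, rfl⟩
  exact ⟨1, p, q, by simp, by simp, by simp, hpq⟩

theorem restrictCon_extendCon_le (C : RingCon R)
    (hQC : ∀ x a b : R, C (x * a) (x * b) → C x 0 ∨ C a b)
    (hker : ∀ a : R, C a 0 → a = 0) :
    restrictCon f (extendCon hinj hfrac C) ≤ C := by
  rintro a b ⟨s, p, q, hs, hp, hq, hpq⟩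
  rw [← map_mul, hinj.eq_iff] at hp hq
  subst hp hq
  exact (hQC s a b hpq).resolve_left fun h0 => hs (by rw [hker s h0, map_zero])

theorem restrictCon_ringConGen_eq (C : RingCon R)
    (hQC : ∀ x a b : R, C (x * a) (x * b) → C x 0 ∨ C a b)
    (hker : ∀ a : R, C a 0 → a = 0) :
    restrictCon f (ringConGen (fun u v : F => ∃ p q : R, C p q ∧ u = f p ∧ v = f q)) = C :=
  le_antisymm
    (le_trans (fun _ _ h => ringConGen_le_extendCon hinj hfrac C h)
      (restrictCon_extendCon_le hinj hfrac C hQC hker))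
    (fun a b h => RingConGen.Rel.of _ _ ⟨a, b, h, rfl, rfl⟩)

end FractionSemifield

theorem stmt_15_general (R F : Type*) [CommSemiring R] [Semifield F]
    (f : R →+* F) (hinj : Function.Injective f)
    (hfrac : ∀ x : F, ∃ r s : R, s ≠ 0 ∧ x = f r / f s)
    (C : RingCon R)
    (hQC : ∀ x a b : R, C (x * a) (x * b) → C x 0 ∨ C a b)
    (hker : ∀ a : R, C a 0 → a = 0) :
    (IsPrimeCon C ↔
      IsPrimeCon (ringConGen
        (fun u v : F => ∃ p q : R, C p q ∧ u = f p ∧ v = f q))) ∧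
    ∀ Q : RingCon F, IsPrimeCon Q ↔ IsPrimeCon (restrictCon f Q) := by
  refine ⟨?_, isPrimeCon_iff_restrictCon hinj hfrac⟩
  rw [isPrimeCon_iff_restrictCon hinj hfrac, restrictCon_ringConGen_eq hinj hfrac C hQC hker]

/-- A QC congruence `C` with trivial kernel is prime iff the congruence it
generates in `Frac R` is prime; a congruence of `Frac R` is prime iff its
restriction to `R` is prime. -/
theorem stmt_15 (R F : Type*) [CommSemiring R] [Semifield F]
    (hcanc : ∀ a b c : R, a * b = a * c → a = 0 ∨ b = c)
    (f : R →+* F) (hinj : Function.Injective f)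
    (hfrac : ∀ x : F, ∃ r s : R, s ≠ 0 ∧ x = f r / f s)
    (C : RingCon R)
    (hQC : ∀ x a b : R, C (x * a) (x * b) → C x 0 ∨ C a b)
    (hker : ∀ a : R, C a 0 → a = 0) :
    (IsPrimeCon C ↔
      IsPrimeCon (ringConGen
        (fun u v : F => ∃ p q : R, C p q ∧ u = f p ∧ v = f q))) ∧
    ∀ Q : RingCon F, IsPrimeCon Q ↔ IsPrimeCon (restrictCon f Q) :=
  stmt_15_general R F f hinj hfrac C hQC hker
end

section
/- In a semifield, every proper congruence is determined by the equivalence class of 1: two proper congruences with the same class of 1 are equal. -/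
/-! Multiplying by `y⁻¹` turns `x ~ y` into `x * y⁻¹ ~ 1` whenever `y ≠ 0`, and every pair other than
`(0, 0)` has, up to symmetry, a nonzero second entry. -/

theorem Con.rel_iff_rel_mul_inv_one {G₀ : Type*} [GroupWithZero G₀] (c : Con G₀) {x y : G₀}
    (hy : y ≠ 0) : c x y ↔ c (x * y⁻¹) 1 := by
  constructor
  · intro hxy
    simpa [mul_inv_cancel₀ hy] using c.mul hxy (c.refl y⁻¹)
  · intro hxy
    simpa [inv_mul_cancel_right₀ hy] using c.mul hxy (c.refl y)

theorem stmt_16_general (F : Type*) [Semifield F] (C₁ C₂ : RingCon F)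
    (h : ∀ a : F, C₁ a 1 ↔ C₂ a 1) : C₁ = C₂ := by
  have key (C : RingCon F) {x y : F} (hy : y ≠ 0) : C x y ↔ C (x * y⁻¹) 1 :=
    C.toCon.rel_iff_rel_mul_inv_one hy
  refine RingCon.ext fun x y => ?_
  rcases eq_or_ne y 0 with rfl | hy
  · rcases eq_or_ne x 0 with rfl | hx
    · exact iff_of_true (C₁.refl 0) (C₂.refl 0)
    · have swap (C : RingCon F) : C x 0 ↔ C 0 x := ⟨C.symm, C.symm⟩
      rw [swap, swap, key C₁ hx, key C₂ hx, h]
  · rw [key C₁ hy, key C₂ hy, h]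

/-- In a semifield, a proper congruence is determined by the class of `1`. -/
theorem stmt_16 (F : Type*) [Semifield F] (C₁ C₂ : RingCon F)
    (h₁ : ∃ x y : F, ¬ C₁ x y) (h₂ : ∃ x y : F, ¬ C₂ x y)
    (h : ∀ a : F, C₁ a 1 ↔ C₂ a 1) : C₁ = C₂ :=
  stmt_16_general F C₁ C₂ h
end

section
/- Let F be an additively idempotent semifield that is a domain. Then every proper congruence of F is prime, and the congruences of F form a chain under inclusion. -/
/-!
Write `a ≤ b` for `a + b = b`. Applied to the twisted pair `(a + b, a)`, `(a + b, b)`, primeness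
of the diagonal makes `≤` total. A congruence `C` on the semifield is determined by the class `K`
of `1`, a subgroup of the nonzero elements that is convex for `≤` (`1 ≤ x ≤ g` with `g ∈ K`
forces `x ∈ K`). Primeness of `C`: if `a₂ ≤ a₁` and `b₂ ≤ b₁`, the twisted relation reduces to
`a₁ b₁ ~ a₁ b₂` or `a₁ b₁ ~ a₂ b₁`, and one cancels `a₁` or `b₁`. Chain: the "absolute value"
`|w| = w + w⁻¹` satisfies `1 ≤ |w|` and `w ∈ K ↔ |w| ∈ K`, so two such classes are nested by
comparing `|s|` and `|t|` for witnesses `s`, `t` of non-inclusion in either direction.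
-/

section CommSemiring

variable {A : Type*} [CommSemiring A]

theorem add_eq_left_or_right_of_isPrimeCon_diagCon (hidem : ∀ a : A, a + a = a)
    (hdom : IsPrimeCon (diagCon A)) (a b : A) : a + b = a ∨ a + b = b :=
  hdom.2 (a + b) a (a + b) b <| show (a + b) * (a + b) + a * b = (a + b) * b + a * (a + b) by
    calc (a + b) * (a + b) + a * b = a * a + b * b + (a * b + a * b) + a * b := by ring
      _ = (a + b) * b + a * (a + b) := by rw [hidem]; ring

theorem mul_add_mul_eq_of_add_eq_s17 (hidem : ∀ a : A, a + a = a) {a₁ a₂ b₁ b₂ : A}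
    (ha : a₂ + a₁ = a₁) (hb : b₂ + b₁ = b₁) : a₁ * b₁ + a₂ * b₂ = a₁ * b₁ :=
  calc a₁ * b₁ + a₂ * b₂ = (a₂ + a₁) * (b₂ + b₁) + a₂ * b₂ := by rw [ha, hb]
    _ = (a₂ * b₂ + a₂ * b₂) + (a₂ * b₁ + a₁ * b₂ + a₁ * b₁) := by ring
    _ = (a₂ + a₁) * (b₂ + b₁) := by rw [hidem]; ring
    _ = a₁ * b₁ := by rw [ha, hb]

end CommSemiring

section DivisionSemiring

variable {F : Type*} [DivisionSemiring F]

theorem one_add_eq_or_one_add_inv_eq (htot : ∀ a b : F, a + b = a ∨ a + b = b) {w : F}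
    (hw : w ≠ 0) : 1 + w = w ∨ 1 + w⁻¹ = w⁻¹ := by
  refine (htot 1 w).symm.imp id fun h => ?_
  rw [add_comm]
  simpa only [add_mul, one_mul, mul_inv_cancel₀ hw] using congrArg (· * w⁻¹) h

theorem one_add_add_inv_eq (htot : ∀ a b : F, a + b = a ∨ a + b = b) {w : F} (hw : w ≠ 0) :
    1 + (w + w⁻¹) = w + w⁻¹ := by
  rcases one_add_eq_or_one_add_inv_eq htot hw with h | h
  · rw [← add_assoc, h]
  · rw [add_left_comm, h]

end DivisionSemiring

namespace RingCon

section Semiring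

variable {R : Type*} [Semiring R] (C : RingCon R)

theorem rel_of_rel_one_zero_s17 (h : C 1 0) (u v : R) : C u v := by
  have hu : C u 0 := by simpa using C.mul (C.refl u) h
  have hv : C v 0 := by simpa using C.mul (C.refl v) h
  exact C.trans hu (C.symm hv)

variable {C} in
theorem rel_one_of_add_eq {g x : R} (hg : C g 1) (h1x : 1 + x = x) (hxg : x + g = g) :
    C x 1 := by
  have hgx : C g x := by simpa only [hxg, add_comm x 1, h1x] using C.add (C.refl x) hg
  exact C.trans (C.symm hgx) hg

end Semiring

section DivisionSemiring

variable {F : Type*} [DivisionSemiring F] (C : RingCon F)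

theorem rel_of_mul_left_rel {a x y : F} (ha : a ≠ 0) (h : C (a * x) (a * y)) : C x y := by
  simpa only [inv_mul_cancel_left₀ ha] using C.mul (C.refl a⁻¹) h

theorem rel_of_mul_right_rel {a x y : F} (ha : a ≠ 0) (h : C (x * a) (y * a)) : C x y := by
  simpa only [mul_inv_cancel_right₀ ha] using C.mul h (C.refl a⁻¹)

theorem eq_zero_of_rel_zero (hC : ¬ C 1 0) {x : F} (h : C x 0) : x = 0 := by
  by_contra hx
  exact hC (by simpa [hx] using C.mul (C.refl x⁻¹) h)

theorem rel_iff_rel_mul_inv_one {x y : F} (hy : y ≠ 0) : C x y ↔ C (x * y⁻¹) 1 := by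
  refine ⟨fun h => ?_, fun h => C.rel_of_mul_right_rel (inv_ne_zero hy) ?_⟩
  · simpa only [mul_inv_cancel₀ hy] using C.mul h (C.refl y⁻¹)
  · rwa [mul_inv_cancel₀ hy]

theorem rel_inv_one_iff {w : F} (hw : w ≠ 0) : C w⁻¹ 1 ↔ C w 1 := by
  rw [C.rel_iff_rel_mul_inv_one one_ne_zero, inv_one, mul_one, ← one_mul w⁻¹,
    ← C.rel_iff_rel_mul_inv_one hw]
  exact ⟨C.symm, C.symm⟩

theorem rel_add_inv_one_iff (hidem : ∀ a : F, a + a = a)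
    (htot : ∀ a b : F, a + b = a ∨ a + b = b) {w : F} (hw : w ≠ 0) :
    C (w + w⁻¹) 1 ↔ C w 1 := by
  refine ⟨fun h => ?_, fun h => by simpa only [hidem] using C.add h ((C.rel_inv_one_iff hw).2 h)⟩
  rcases one_add_eq_or_one_add_inv_eq htot hw with h1 | h1
  · exact rel_one_of_add_eq h h1 (by rw [← add_assoc, hidem])
  · exact (C.rel_inv_one_iff hw).1 (rel_one_of_add_eq h h1 (by rw [add_left_comm, hidem]))

theorem rel_one_of_add_inv_le (hidem : ∀ a : F, a + a = a)
    (htot : ∀ a b : F, a + b = a ∨ a + b = b) {s t : F} (hs : s ≠ 0) (ht : t ≠ 0)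
    (hCs : C s 1) (hts : (t + t⁻¹) + (s + s⁻¹) = s + s⁻¹) : C t 1 :=
  (C.rel_add_inv_one_iff hidem htot ht).1 <|
    rel_one_of_add_eq ((C.rel_add_inv_one_iff hidem htot hs).2 hCs) (one_add_add_inv_eq htot ht) hts

variable {C} in
theorem le_of_forall_rel_one {D : RingCon F} (hC : ¬ C 1 0) (h : ∀ w, C w 1 → D w 1) :
    C ≤ D := by
  intro u v huv
  rcases eq_or_ne v 0 with rfl | hv
  · rw [C.eq_zero_of_rel_zero hC huv]
    exact D.refl 0
  · exact (D.rel_iff_rel_mul_inv_one hv).2 (h _ ((C.rel_iff_rel_mul_inv_one hv).1 huv))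

theorem forall_rel_one_imp_total (hidem : ∀ a : F, a + a = a)
    (htot : ∀ a b : F, a + b = a ∨ a + b = b) {C D : RingCon F} (hC : ¬ C 1 0) (hD : ¬ D 1 0) :
    (∀ w, C w 1 → D w 1) ∨ (∀ w, D w 1 → C w 1) := by
  by_contra! ⟨⟨s, hCs, hDs⟩, ⟨t, hDt, hCt⟩⟩
  have hs : s ≠ 0 := by rintro rfl; exact hC (C.symm hCs)
  have ht : t ≠ 0 := by rintro rfl; exact hD (D.symm hDt)
  rcases htot (s + s⁻¹) (t + t⁻¹) with h | h
  · exact hCt (C.rel_one_of_add_inv_le hidem htot hs ht hCs (by rwa [add_comm]))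
  · exact hDs (D.rel_one_of_add_inv_le hidem htot ht hs hDt h)

end DivisionSemiring

theorem rel_or_rel_of_rel_mul_add_mul {F : Type*} [Semifield F] (hidem : ∀ a : F, a + a = a)
    (htot : ∀ a b : F, a + b = a ∨ a + b = b) (C : RingCon F) {a₁ a₂ b₁ b₂ : F}
    (h : C (a₁ * b₁ + a₂ * b₂) (a₁ * b₂ + a₂ * b₁)) : C a₁ a₂ ∨ C b₁ b₂ := by
  wlog ha : a₂ + a₁ = a₁ generalizing a₁ a₂
  · have ha' : a₁ + a₂ = a₂ := (htot a₁ a₂).resolve_left fun h' => ha (by rwa [add_comm])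
    refine (this ?_ ha').imp C.symm id
    rw [add_comm (a₂ * b₁), add_comm (a₂ * b₂)]
    exact C.symm h
  wlog hb : b₂ + b₁ = b₁ generalizing b₁ b₂
  · have hb' : b₁ + b₂ = b₂ := (htot b₁ b₂).resolve_left fun h' => hb (by rwa [add_comm])
    exact (this (C.symm h) hb').imp id C.symm
  rw [mul_add_mul_eq_of_add_eq_s17 hidem ha hb] at h
  rcases htot (a₁ * b₂) (a₂ * b₁) with h' | h' <;> rw [h'] at h
  · rcases eq_or_ne a₁ 0 with rfl | ha₁
    · rw [add_zero] at ha
      exact Or.inl (ha ▸ C.refl 0)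
    · exact Or.inr (C.rel_of_mul_left_rel ha₁ h)
  · rcases eq_or_ne b₁ 0 with rfl | hb₁
    · rw [add_zero] at hb
      exact Or.inr (hb ▸ C.refl 0)
    · exact Or.inl (C.rel_of_mul_right_rel hb₁ h)

end RingCon

/-- In an additively idempotent semifield that is a domain, every proper
congruence is prime and the congruences form a chain. -/
theorem stmt_17 (F : Type*) [Semifield F] (hidem : ∀ a : F, a + a = a)
    (hdom : IsPrimeCon (diagCon F)) :
    (∀ C : RingCon F, (∃ x y : F, ¬ C x y) → IsPrimeCon C) ∧
    ∀ C D : RingCon F, C ≤ D ∨ D ≤ C := by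
  have htot := add_eq_left_or_right_of_isPrimeCon_diagCon hidem hdom
  refine ⟨fun C hC => ⟨hC, fun _ _ _ _ => C.rel_or_rel_of_rel_mul_add_mul hidem htot⟩,
    fun C D => ?_⟩
  by_cases hC : C 1 0
  · exact Or.inr fun u v _ => C.rel_of_rel_one_zero_s17 hC u v
  by_cases hD : D 1 0
  · exact Or.inl fun u v _ => D.rel_of_rel_one_zero_s17 hD u v
  exact (RingCon.forall_rel_one_imp_total hidem htot hC hD).imp
    (RingCon.le_of_forall_rel_one hC) (RingCon.le_of_forall_rel_one hD)
end
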